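/- For integers n ≥ m ≥ 2, F(P_n ⊠ P_m) ≥ nm − m + ⌈(m−4)/3⌉. -/

import Mathlib

namespace ZeroForcing

/-- One step of the zero forcing process: all vertices forced from blue set `S`
(a blue vertex with exactly one white neighbor forces that neighbor). -/
def step {V : Type*} (G : SimpleGraph V) (S : Set V) : Set V :=
  S ∪ {v | ∃ u ∈ S, G.Adj u v ∧ ∀ w, G.Adj u w → w ∉ S → w = v}

/-- `S` is a zero forcing set: iterating the color-change rule makes everything blue. -/
def IsZeroForcingSet {V : Type*} (G : SimpleGraph V) (S : Set V) : Prop :=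
  ∃ k, (step G)^[k] S = Set.univ

/-- `S` is a failed zero forcing set. -/
def IsFailedSet {V : Type*} (G : SimpleGraph V) (S : Set V) : Prop :=
  ¬ IsZeroForcingSet G S

/-- The zero forcing number `Z(G)`. -/
noncomputable def Z {V : Type*} (G : SimpleGraph V) : ℕ :=
  sInf {k | ∃ S : Set V, S.ncard = k ∧ IsZeroForcingSet G S}

/-- The failed zero forcing number `F(G)`. -/
noncomputable def F {V : Type*} (G : SimpleGraph V) : ℕ :=
  sSup {k | ∃ S : Set V, S.ncard = k ∧ IsFailedSet G S}

/-- The strong product of two simple graphs. -/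
def strongProd {α β : Type*} (G : SimpleGraph α) (H : SimpleGraph β) :
    SimpleGraph (α × β) where
  Adj x y := x ≠ y ∧ (x.1 = y.1 ∨ G.Adj x.1 y.1) ∧ (x.2 = y.2 ∨ H.Adj x.2 y.2)
  symm := by
    constructor
    rintro x y ⟨h1, h2, h3⟩
    exact ⟨h1.symm, h2.imp Eq.symm (fun h => G.adj_symm h), h3.imp Eq.symm (fun h => H.adj_symm h)⟩
  loopless := ⟨fun x h => h.1 rfl⟩

/-- The lexicographic product of two simple graphs. -/
def lexProd {α β : Type*} (G : SimpleGraph α) (H : SimpleGraph β) :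
    SimpleGraph (α × β) where
  Adj x y := G.Adj x.1 y.1 ∨ (x.1 = y.1 ∧ H.Adj x.2 y.2)
  symm := by
    constructor
    rintro x y (h | ⟨h1, h2⟩)
    · exact Or.inl h.symm
    · exact Or.inr ⟨h1.symm, h2.symm⟩
  loopless := by
    constructor
    rintro x (h | ⟨h1, h2⟩)
    · exact G.loopless.irrefl _ h
    · exact H.loopless.irrefl _ h2

/-- The corona `G ∘ H`: one copy of `G` and, for each vertex `a` of `G`, a copy of `H`
all of whose vertices are joined to `a`. -/
def corona {α β : Type*} (G : SimpleGraph α) (H : SimpleGraph β) :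
    SimpleGraph (α ⊕ α × β) where
  Adj x y :=
    match x, y with
    | .inl a, .inl a' => G.Adj a a'
    | .inl a, .inr p => a = p.1
    | .inr p, .inl a' => p.1 = a'
    | .inr p, .inr q => p.1 = q.1 ∧ H.Adj p.2 q.2
  symm := by
    constructor
    rintro (a | p) (a' | q) h
    · exact G.adj_symm h
    · exact h.symm
    · exact h.symm
    · exact ⟨h.1.symm, H.adj_symm h.2⟩
  loopless := by
    constructor
    rintro (a | p) h
    · exact G.loopless.irrefl _ h
    · exact H.loopless.irrefl _ h.2

end ZeroForcing

/-!
Colour blue every vertex outside the last row, and the vertices of the last row in columns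
`2, 5, 8, …` that are at least three columns from the end. The three columns around any blue
vertex then always contain at least two white vertices of the last row, so no blue vertex has
exactly one white neighbour and the colouring is stalled. It has `(n - 1) m + ⌊(m - 2) / 3⌋`
blue vertices.
-/

namespace ZeroForcing

variable {V : Type*} (G : SimpleGraph V)

theorem step_eq_self_of_forall_exists_ne {S : Set V}
    (h : ∀ u ∈ S, ∀ v ∉ S, G.Adj u v → ∃ w ∉ S, G.Adj u w ∧ w ≠ v) :
    step G S = S := by
  refine Set.union_eq_left.mpr ?_
  rintro v ⟨u, hu, huv, hforced⟩
  by_contra hv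
  obtain ⟨w, hw, huw, hwv⟩ := h u hu v hv huv
  exact hwv (hforced w huw hw)

theorem isFailedSet_of_step_eq_self {S : Set V} (hS : step G S = S) (hne : S ≠ Set.univ) :
    IsFailedSet G S := by
  rintro ⟨k, hk⟩
  exact hne (Function.iterate_fixed hS k ▸ hk)

theorem ncard_le_F [Finite V] {S : Set V} (hS : IsFailedSet G S) : S.ncard ≤ F G := by
  refine le_csSup ⟨Nat.card V, ?_⟩ ⟨S, rfl, hS⟩
  rintro k ⟨T, rfl, -⟩
  exact Set.ncard_le_card T

theorem step_strongProd_eq_self {α β : Type*} (G : SimpleGraph α) (H : SimpleGraph β) (a : α)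
    {B : Set β} (hB : ∀ b₀ b, ∃ c, (b₀ = c ∨ H.Adj b₀ c) ∧ c ∉ B ∧ c ≠ b) :
    step (strongProd G H) {p | p.1 ≠ a ∨ p.2 ∈ B} = {p | p.1 ≠ a ∨ p.2 ∈ B} := by
  refine step_eq_self_of_forall_exists_ne _ ?_
  rintro ⟨a₀, b₀⟩ hu ⟨a', b⟩ hv ⟨-, hrow, -⟩
  obtain rfl : a' = a := by simpa using (not_or.mp hv).1
  obtain ⟨c, hc, hcB, hcb⟩ := hB b₀ b
  have hw : (a', c) ∉ {p : α × β | p.1 ≠ a' ∨ p.2 ∈ B} := by simp [hcB]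
  refine ⟨(a', c), hw, ⟨fun h => hw (h ▸ hu), hrow, hc⟩, fun h => hcb (Prod.ext_iff.mp h).2⟩

end ZeroForcing

theorem Set.ncard_setOf_fst_ne_or_snd_mem {α β : Type*} [Finite α] [Finite β] (a : α)
    (B : Set β) :
    {p : α × β | p.1 ≠ a ∨ p.2 ∈ B}.ncard = (Nat.card α - 1) * Nat.card β + B.ncard := by
  have hcompl : {p : α × β | p.1 ≠ a ∨ p.2 ∈ B}ᶜ = {a} ×ˢ Bᶜ := by
    ext p
    simp
  have hS := Set.ncard_add_ncard_compl {p : α × β | p.1 ≠ a ∨ p.2 ∈ B}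
  have hB := Set.ncard_add_ncard_compl B
  rw [hcompl, Set.ncard_prod, Set.ncard_singleton, one_mul, Nat.card_prod] at hS
  have hα : 0 < Nat.card α := Nat.card_pos_iff.mpr ⟨⟨a⟩, inferInstance⟩
  rw [Nat.sub_one_mul]
  have : Nat.card β ≤ Nat.card α * Nat.card β := Nat.le_mul_of_pos_left _ hα
  omega

def spacedCols (m : ℕ) : Set (Fin m) := {j | j.val % 3 = 2 ∧ j.val + 3 ≤ m}

theorem ncard_spacedCols (m : ℕ) : (spacedCols m).ncard = (m - 2) / 3 := by
  have hrange : spacedCols m =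
      Set.range (fun k : Fin ((m - 2) / 3) => (⟨3 * k + 2, by omega⟩ : Fin m)) := by
    ext j
    simp only [spacedCols, Set.mem_ofPred_eq, Set.mem_range, Fin.ext_iff]
    refine ⟨fun hj => ⟨⟨j / 3, by omega⟩, by rw [Fin.val_mk]; omega⟩, ?_⟩
    rintro ⟨k, hk⟩
    omega
  rw [hrange, Set.ncard_range_of_injective, Nat.card_eq_fintype_card, Fintype.card_fin]
  intro k k' h
  simpa [Fin.ext_iff] using h

theorem pathGraph_exists_ne_notMem_spacedCols {m : ℕ} (hm : 2 ≤ m) (b₀ b : Fin m) :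
    ∃ c, (b₀ = c ∨ (SimpleGraph.pathGraph m).Adj b₀ c) ∧ c ∉ spacedCols m ∧ c ≠ b := by
  simp only [spacedCols, Set.mem_ofPred_eq, SimpleGraph.pathGraph_adj, ne_eq, Fin.ext_iff]
  suffices ∃ c < m, (b₀.val = c ∨ b₀.val + 1 = c ∨ c + 1 = b₀.val) ∧
      ¬(c % 3 = 2 ∧ c + 3 ≤ m) ∧ ¬c = b.val by
    obtain ⟨c, hc, hc'⟩ := this
    exact ⟨⟨c, hc⟩, hc'⟩
  have hb₀ := b₀.isLt
  by_cases hcenter : ¬(b₀.val % 3 = 2 ∧ b₀.val + 3 ≤ m) ∧ b₀.val ≠ b.val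
  · exact ⟨b₀.val, by omega⟩
  by_cases hleft : 1 ≤ b₀.val ∧ ¬((b₀.val - 1) % 3 = 2 ∧ b₀.val + 2 ≤ m) ∧ b₀.val - 1 ≠ b.val
  · exact ⟨b₀.val - 1, by omega⟩
  · exact ⟨b₀.val + 1, by omega⟩

theorem failed_zf_strong_paths_lower (n m : ℕ) (hm : 2 ≤ m) (hnm : m ≤ n) :
    n * m - m + (m - 4 + 2) / 3 ≤
      ZeroForcing.F
        (ZeroForcing.strongProd (SimpleGraph.pathGraph n) (SimpleGraph.pathGraph m)) := by
  let lastRow : Fin n := ⟨n - 1, by omega⟩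
  let S : Set (Fin n × Fin m) := {p | p.1 ≠ lastRow ∨ p.2 ∈ spacedCols m}
  have hstalled : ZeroForcing.step
      (ZeroForcing.strongProd (SimpleGraph.pathGraph n) (SimpleGraph.pathGraph m)) S = S :=
    ZeroForcing.step_strongProd_eq_self _ _ lastRow (pathGraph_exists_ne_notMem_spacedCols hm)
  have hne : S ≠ Set.univ := fun h => by
    have : (lastRow, (⟨0, by omega⟩ : Fin m)) ∈ S := h ▸ Set.mem_univ _
    simp [S, spacedCols] at this
  have hcard : S.ncard = (n - 1) * m + (m - 2) / 3 := by
    simp only [S, Set.ncard_setOf_fst_ne_or_snd_mem, Nat.card_eq_fintype_card, Fintype.card_fin,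
      ncard_spacedCols]
  have := ZeroForcing.ncard_le_F _ (ZeroForcing.isFailedSet_of_step_eq_self _ hstalled hne)
  rw [Nat.sub_one_mul] at hcard
  omega
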